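/- arXiv:1502.04895 — 5 statements merged into one kernel-verified Lean document; each statement's English description precedes it below -/
import Mathlib

section
/- Let I₁ > 0 and F = I₃²λ² − 4mglI₁ with mgl > 0. If F < 0, then for every real E at least one root of t⁴ + ((E²+F)/(2I₁²)) t² + (E²−F)²/(16I₁⁴) has non-zero real part. -/
/-!
Writing `b = (E² + F)/(2I₁²)` and `s = E √(-F)/(2I₁²)`, the constant term equals `b²/4 + s²`,
so the quartic is `(t² + b/2)² + s²` and its roots are the square roots of `w = -b/2 + s i`.
A purely imaginary number has a non-positive real square, and `w` is not one: either `E ≠ 0`,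
so `s ≠ 0`, or `E = 0`, so `-b/2 = -F/(4I₁²) > 0`.
-/

namespace Complex

theorem re_ne_zero_of_sq_eq {z w : ℂ} (hz : z ^ 2 = w) (hw : 0 < w.re ∨ w.im ≠ 0) :
    z.re ≠ 0 := by
  intro hre
  have hre_sq : w.re = -z.im ^ 2 := by rw [← hz, sq, mul_re, hre]; ring
  have him_sq : w.im = 0 := by rw [← hz, sq, mul_im, hre]; ring
  rcases hw with hw | hw
  · nlinarith [sq_nonneg z.im]
  · exact hw him_sq

theorem exists_biquadratic_root_re_ne_zero (b s : ℝ) (h : b < 0 ∨ s ≠ 0) :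
    ∃ z : ℂ, z ^ 4 + (b : ℂ) * z ^ 2 + ((b ^ 2 / 4 + s ^ 2 : ℝ) : ℂ) = 0 ∧ z.re ≠ 0 := by
  set w : ℂ := -(b : ℂ) / 2 + s * I
  obtain ⟨z, hz⟩ := IsAlgClosed.exists_pow_nat_eq w (n := 2) two_pos
  refine ⟨z, ?_, re_ne_zero_of_sq_eq hz ?_⟩
  · have hz4 : z ^ 4 = w ^ 2 := by rw [← hz]; ring
    rw [hz4, hz]
    push_cast
    linear_combination (s : ℂ) ^ 2 * I_sq
  · rcases h with hb | hs
    · left; simpa [w] using hb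
    · right; simpa [w] using hs

end Complex

theorem unstable_regime_root_with_real_part_general (I1 F : ℝ)
    (hI1 : 0 < I1) (hFneg : F < 0) (E : ℝ) :
    ∃ z : ℂ,
      z^4 + ((((E^2 + F)/(2*I1^2) : ℝ)) : ℂ) * z^2
        + ((((E^2 - F)^2/(16*I1^4) : ℝ)) : ℂ) = 0 ∧ z.re ≠ 0 := by
  have hsqrt : √(-F) ^ 2 = -F := Real.sq_sqrt (by linarith)
  have hconst : (E ^ 2 - F) ^ 2 / (16 * I1 ^ 4)
      = ((E ^ 2 + F) / (2 * I1 ^ 2)) ^ 2 / 4 + (E * √(-F) / (2 * I1 ^ 2)) ^ 2 := by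
    rw [div_pow (E * √(-F)), mul_pow, hsqrt]
    field_simp
    ring
  rw [hconst]
  apply Complex.exists_biquadratic_root_re_ne_zero
  rcases eq_or_ne E 0 with rfl | hE
  · left
    have hb : F / (2 * I1 ^ 2) < 0 := div_neg_of_neg_of_pos hFneg (by positivity)
    simpa using hb
  · right
    have hsqrt_pos : 0 < √(-F) := Real.sqrt_pos.mpr (by linarith)
    positivity

theorem unstable_regime_root_with_real_part (I1 I3 lam m g l F : ℝ)
    (hI1 : 0 < I1) (hmgl : 0 < m*g*l)
    (hF : F = I3^2*lam^2 - 4*m*g*l*I1) (hFneg : F < 0) (E : ℝ) :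
    ∃ z : ℂ,
      z^4 + ((((E^2 + F)/(2*I1^2) : ℝ)) : ℂ) * z^2
        + ((((E^2 - F)^2/(16*I1^4) : ℝ)) : ℂ) = 0 ∧ z.re ≠ 0 :=
  unstable_regime_root_with_real_part_general I1 F hI1 hFneg E
end

section
/- Let I₁ > 0, F = I₃²λ² − 4mglI₁ > 0. Then there exists η ∈ ℝ such that, with E = I₃λ − I₁(2η+λ), the polynomial t⁴ + ((E²+F)/(2I₁²)) t² + (E²−F)²/(16I₁⁴) has 0 as a root of multiplicity exactly 2, the other two roots being a non-zero purely imaginary conjugate pair. -/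
/-!
Since `E` is affine in `η` with slope `-2 I₁ ≠ 0`, one can choose `η` with `E = √F`. Then the
constant term `(E² - F)² / (16 I₁⁴)` vanishes and the `t²`-coefficient is `F / I₁² = b²` with
`b = √F / I₁`, so the quartic is `t² (t² + b²) = t² (t - i b) (t + i b)`.
-/

open Polynomial

lemma Polynomial.X_sub_C_I_mul_mul_X_add_C_I_mul (b : ℂ) :
    (X - C (Complex.I * b)) * (X + C (Complex.I * b)) = X ^ 2 + C (b ^ 2) := by
  have hIb : (Complex.I * b) ^ 2 = -b ^ 2 := by rw [mul_pow, Complex.I_sq]; ring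
  calc (X - C (Complex.I * b)) * (X + C (Complex.I * b)) = X ^ 2 - C (Complex.I * b) ^ 2 := by
        ring
    _ = X ^ 2 + C (b ^ 2) := by rw [← C_pow, hIb, C_neg, sub_neg_eq_add]

lemma exists_sub_mul_two_mul_add_eq {a : ℝ} (ha : a ≠ 0) (c d e : ℝ) :
    ∃ η : ℝ, c - a * (2 * η + d) = e :=
  ⟨(c - a * d - e) / (2 * a), by field_simp; ring⟩

lemma quartic_eq_X_sq_mul_of_sq_eq {I1 E F : ℝ} (hI1 : I1 ≠ 0) (hE : E ^ 2 = F) :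
    (X ^ 4 + C ((((E ^ 2 + F) / (2 * I1 ^ 2) : ℝ)) : ℂ) * X ^ 2
        + C ((((E ^ 2 - F) ^ 2 / (16 * I1 ^ 4) : ℝ)) : ℂ) : ℂ[X])
      = X ^ 2 * (X - C (Complex.I * (E / I1 : ℝ))) * (X + C (Complex.I * (E / I1 : ℝ))) := by
  have hcoeff : (E ^ 2 + F) / (2 * I1 ^ 2) = (E / I1) ^ 2 := by
    rw [← hE]; field_simp; ring
  rw [hcoeff, hE, sub_self, mul_assoc, Polynomial.X_sub_C_I_mul_mul_X_add_C_I_mul]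
  push_cast
  simp only [zero_pow two_ne_zero, zero_div, C_0, add_zero]
  ring

theorem fast_superfast_at_every_stable_point_general (I1 I3 lam F : ℝ)
    (hI1 : 0 < I1)
    (hFpos : 0 < F) :
    ∃ η : ℝ, ∃ b : ℝ, b ≠ 0 ∧
      (Polynomial.X^4
        + Polynomial.C (((((I3*lam - I1*(2*η + lam))^2 + F)/(2*I1^2) : ℝ)) : ℂ) * Polynomial.X^2
        + Polynomial.C (((((I3*lam - I1*(2*η + lam))^2 - F)^2/(16*I1^4) : ℝ)) : ℂ)
        : Polynomial ℂ)
      = Polynomial.X^2 * (Polynomial.X - Polynomial.C (Complex.I * b))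
          * (Polynomial.X + Polynomial.C (Complex.I * b)) := by
  obtain ⟨η, hη⟩ := exists_sub_mul_two_mul_add_eq hI1.ne' (I3 * lam) lam (Real.sqrt F)
  refine ⟨η, Real.sqrt F / I1, div_ne_zero (Real.sqrt_pos.mpr hFpos).ne' hI1.ne', ?_⟩
  rw [hη]
  exact quartic_eq_X_sq_mul_of_sq_eq hI1.ne' (Real.sq_sqrt hFpos.le)

theorem fast_superfast_at_every_stable_point (I1 I3 lam m g l F : ℝ)
    (hI1 : 0 < I1)
    (hF : F = I3^2*lam^2 - 4*m*g*l*I1) (hFpos : 0 < F) :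
    ∃ η : ℝ, ∃ b : ℝ, b ≠ 0 ∧
      (Polynomial.X^4
        + Polynomial.C (((((I3*lam - I1*(2*η + lam))^2 + F)/(2*I1^2) : ℝ)) : ℂ) * Polynomial.X^2
        + Polynomial.C (((((I3*lam - I1*(2*η + lam))^2 - F)^2/(16*I1^4) : ℝ)) : ℂ)
        : Polynomial ℂ)
      = Polynomial.X^2 * (Polynomial.X - Polynomial.C (Complex.I * b))
          * (Polynomial.X + Polynomial.C (Complex.I * b)) :=
  fast_superfast_at_every_stable_point_general I1 I3 lam F hI1 hFpos
end

section
/- If λ² > 4mglI₁/I₃² (with I₁, I₃ > 0, mgl > 0), then there exists η ∈ ℝ such that AC − B² > 0, where A = −mgl + (λ²I₃/(2I₁))(2I₃−I₁) − λI₃η, B = λ(2I₃−I₁)/(2I₁) − η, C = 1/I₁; conversely if λ² < 4mglI₁/I₃², then AC − B² < 0 for all η. -/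
/-! Completing the square in `η` writes `A C - B²` as `D / (4 I₁²) - (η - η₀)²` with
`D = λ² I₃² - 4 m g l I₁` and `η₀ = λ (I₃ - I₁) / (2 I₁)`. The hypothesis on `λ²` is exactly the
sign of `D`: if `D > 0` the choice `η = η₀` makes the form positive, and if `D < 0` it is negative
for every `η`. -/

section
variable {I1 I3 lam k : ℝ}

lemma stability_form_eq_sub_sq (hI1 : I1 ≠ 0) (η : ℝ) :
    (-k + (lam^2*I3/(2*I1))*(2*I3 - I1) - lam*I3*η) * (1/I1) - (lam*(2*I3 - I1)/(2*I1) - η)^2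
      = (lam^2*I3^2 - 4*k*I1) / (4*I1^2) - (η - lam*(I3 - I1)/(2*I1))^2 := by
  field_simp
  ring

lemma stability_discriminant_pos_iff (hI1 : I1 ≠ 0) (hI3 : I3 ≠ 0) :
    0 < (lam^2*I3^2 - 4*k*I1) / (4*I1^2) ↔ 4*k*I1/I3^2 < lam^2 := by
  rw [div_pos_iff_of_pos_right (by positivity), sub_pos, div_lt_iff₀ (by positivity)]

lemma stability_discriminant_neg_iff (hI1 : I1 ≠ 0) (hI3 : I3 ≠ 0) :
    (lam^2*I3^2 - 4*k*I1) / (4*I1^2) < 0 ↔ lam^2 < 4*k*I1/I3^2 := by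
  rw [div_lt_iff₀ (by positivity), zero_mul, sub_neg, lt_div_iff₀ (by positivity)]

end

theorem fast_top_stability_condition_general (I1 I3 lam m g l : ℝ)
    (hI1 : 0 < I1) (hI3 : 0 < I3) :
    (lam^2 > 4*m*g*l*I1/I3^2 →
      ∃ η : ℝ,
        (-(m*g*l) + (lam^2*I3/(2*I1))*(2*I3 - I1) - lam*I3*η) * (1/I1)
          - (lam*(2*I3 - I1)/(2*I1) - η)^2 > 0) ∧
    (lam^2 < 4*m*g*l*I1/I3^2 →
      ∀ η : ℝ,
        (-(m*g*l) + (lam^2*I3/(2*I1))*(2*I3 - I1) - lam*I3*η) * (1/I1)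
          - (lam*(2*I3 - I1)/(2*I1) - η)^2 < 0) := by
  have h4mgl : 4*m*g*l*I1 = 4*(m*g*l)*I1 := by ring
  rw [h4mgl]
  constructor
  · intro h
    refine ⟨lam*(I3 - I1)/(2*I1), ?_⟩
    rw [stability_form_eq_sub_sq hI1.ne', sub_self, zero_pow two_ne_zero, sub_zero]
    exact (stability_discriminant_pos_iff hI1.ne' hI3.ne').2 h
  · intro h η
    rw [stability_form_eq_sub_sq hI1.ne']
    have hD := (stability_discriminant_neg_iff hI1.ne' hI3.ne').2 h
    linarith [sq_nonneg (η - lam*(I3 - I1)/(2*I1))]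

theorem fast_top_stability_condition (I1 I3 lam m g l : ℝ)
    (hI1 : 0 < I1) (hI3 : 0 < I3) (hmgl : 0 < m*g*l) :
    (lam^2 > 4*m*g*l*I1/I3^2 →
      ∃ η : ℝ,
        (-(m*g*l) + (lam^2*I3/(2*I1))*(2*I3 - I1) - lam*I3*η) * (1/I1)
          - (lam*(2*I3 - I1)/(2*I1) - η)^2 > 0) ∧
    (lam^2 < 4*m*g*l*I1/I3^2 →
      ∀ η : ℝ,
        (-(m*g*l) + (lam^2*I3/(2*I1))*(2*I3 - I1) - lam*I3*η) * (1/I1)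
          - (lam*(2*I3 - I1)/(2*I1) - η)^2 < 0) :=
  fast_top_stability_condition_general I1 I3 lam m g l hI1 hI3
end

section
/- If I₃ < I₁ (prolate case) and mgl > 0, the line η = λ/2 does not intersect the hyperbola (2I₃−I₁)λ² + 4(I₃−I₁)ηλ − 4I₁η² − 4mgl = 0, while for any λ with I₃²λ² > 4mglI₁ there exists η ∈ ℝ with (λ,η) on the hyperbola. -/
/-
On the line `η = λ/2` the hyperbola's left-hand side collapses to `4((I₃ - I₁)λ² - mgl)`, which is
negative in the prolate case. Off the line, the equation is a quadratic in `η` with leading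
coefficient `-4I₁` and discriminant `16(I₃²λ² - 4mglI₁)`, so it has a real root exactly when
`I₃²λ² ≥ 4mglI₁`.
-/

def hyperbolaLHS (I1 I3 k lam η : ℝ) : ℝ :=
  (2*I3 - I1)*lam^2 + 4*(I3 - I1)*η*lam - 4*I1*η^2 - 4*k

lemma hyperbolaLHS_half_lt_zero {I1 I3 k : ℝ} (hle : I3 ≤ I1) (hk : 0 < k) (lam : ℝ) :
    hyperbolaLHS I1 I3 k lam (lam/2) < 0 := by
  have hcollapse : hyperbolaLHS I1 I3 k lam (lam/2) = 4*((I3 - I1)*lam^2 - k) := by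
    unfold hyperbolaLHS; ring
  rw [hcollapse]
  nlinarith [sq_nonneg lam]

lemma discrim_hyperbolaLHS (I1 I3 k lam : ℝ) :
    discrim (-4*I1) (4*(I3 - I1)*lam) ((2*I3 - I1)*lam^2 - 4*k) = 16*(I3^2*lam^2 - 4*k*I1) := by
  unfold discrim; ring

lemma exists_hyperbolaLHS_eq_zero {I1 I3 k lam : ℝ} (hI1 : I1 ≠ 0)
    (hdisc : 4*k*I1 ≤ I3^2*lam^2) : ∃ η, hyperbolaLHS I1 I3 k lam η = 0 := by
  have hsq : discrim (-4*I1) (4*(I3 - I1)*lam) ((2*I3 - I1)*lam^2 - 4*k)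
      = (4*√(I3^2*lam^2 - 4*k*I1)) * (4*√(I3^2*lam^2 - 4*k*I1)) := by
    rw [discrim_hyperbolaLHS, mul_mul_mul_comm, Real.mul_self_sqrt (by linarith)]
    ring
  obtain ⟨η, hη⟩ := exists_quadratic_eq_zero (by simpa using hI1) ⟨_, hsq⟩
  exact ⟨η, by rw [← hη]; unfold hyperbolaLHS; ring⟩

theorem prolate_case_line_and_hyperbola_general (I1 I3 m g l : ℝ)
    (hI1 : 0 < I1) (hlt : I3 < I1) (hmgl : 0 < m*g*l) :
    (∀ lam : ℝ,
      ¬((2*I3 - I1)*lam^2 + 4*(I3 - I1)*(lam/2)*lam - 4*I1*(lam/2)^2 - 4*(m*g*l) = 0)) ∧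
    (∀ lam : ℝ, I3^2*lam^2 > 4*m*g*l*I1 →
      ∃ η : ℝ, (2*I3 - I1)*lam^2 + 4*(I3 - I1)*η*lam - 4*I1*η^2 - 4*(m*g*l) = 0) := by
  exact ⟨fun lam => (hyperbolaLHS_half_lt_zero hlt.le hmgl lam).ne,
    fun lam hlam => exists_hyperbolaLHS_eq_zero hI1.ne' (by linarith)⟩

theorem prolate_case_line_and_hyperbola (I1 I3 m g l : ℝ)
    (hI1 : 0 < I1) (hI3 : 0 < I3) (hlt : I3 < I1) (hmgl : 0 < m*g*l) :
    (∀ lam : ℝ,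
      ¬((2*I3 - I1)*lam^2 + 4*(I3 - I1)*(lam/2)*lam - 4*I1*(lam/2)^2 - 4*(m*g*l) = 0)) ∧
    (∀ lam : ℝ, I3^2*lam^2 > 4*m*g*l*I1 →
      ∃ η : ℝ, (2*I3 - I1)*lam^2 + 4*(I3 - I1)*η*lam - 4*I1*η^2 - 4*(m*g*l) = 0) :=
  prolate_case_line_and_hyperbola_general I1 I3 m g l hI1 hlt hmgl
end

section
/- Let h_{ξ}(Λ,π) = mgl e₃·Λe₃ + ½ π·(ΛIΛ⁻¹)⁻¹π − (π·e₃)ξ_L + (π·Λe₃)ξ_R with I = diag(I₁,I₁,I₃). Its derivative at (Id, λI₃e₃) in the right-trivialized direction (δθ,δπ) equals (λ − (ξ_L − ξ_R)) δπ·e₃; hence (Id, λI₃e₃) is a critical point of h_ξ if and only if ξ_L − ξ_R = λ. -/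
/-!
Along `Λ = 1 + t Ω` the conjugated inverse inertia `(Λ I Λ⁻¹)⁻¹` has derivative `Ω I⁻¹ - I⁻¹ Ω`.
Because `π₀ = λ I₃ e₃` is an eigenvector of the symmetric matrix `I⁻¹`, the two contributions of
this derivative to the kinetic energy cancel, while the potential and the `ξ_R`-term only see
`e₃ ⬝ (δθ × e₃) = 0`. What survives is `λ δπ ⬝ e₃` from the kinetic energy and
`(ξ_R - ξ_L) δπ ⬝ e₃` from the two momentum terms.
-/

open Matrix

noncomputable def augmentedHamiltonian {n : Type*} [Fintype n] [DecidableEq n]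
    (mgl ξL ξR : ℝ) (e : n → ℝ) (J Λ : Matrix n n ℝ) (π : n → ℝ) : ℝ :=
  mgl * (e ⬝ᵥ Λ *ᵥ e) + 1 / 2 * (π ⬝ᵥ (Λ * J * Λ⁻¹)⁻¹ *ᵥ π) - (π ⬝ᵥ e) * ξL + (π ⬝ᵥ Λ *ᵥ e) * ξR

section MatrixCurves

-- Any norm gives the same derivatives; the `ℓ∞` operator norm makes matrices a normed algebra,
-- which `hasFDerivAt_ringInverse` needs.
attribute [local instance] Matrix.linftyOpNormedRing Matrix.linftyOpNormedAlgebra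

variable {n : Type*} [Fintype n] {u v : ℝ → n → ℝ} {u' v' : n → ℝ} {t : ℝ}

theorem HasDerivAt.dotProduct (hu : HasDerivAt u u' t) (hv : HasDerivAt v v' t) :
    HasDerivAt (fun s => u s ⬝ᵥ v s) (u' ⬝ᵥ v t + u t ⬝ᵥ v') t := by
  simp only [_root_.dotProduct, ← Finset.sum_add_distrib]
  exact HasDerivAt.fun_sum fun i _ => (hasDerivAt_pi.1 hu i).fun_mul (hasDerivAt_pi.1 hv i)

variable [DecidableEq n] {A : ℝ → Matrix n n ℝ} {A' : Matrix n n ℝ}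

theorem HasDerivAt.matrix_inv (hA : HasDerivAt A A' t) (ht : IsUnit (A t)) :
    HasDerivAt (fun s => (A s)⁻¹) (-((A t)⁻¹ * A' * (A t)⁻¹)) t := by
  obtain ⟨U, hU⟩ := ht
  simp_rw [nonsing_inv_eq_ringInverse]
  rw [← hU, Ring.inverse_unit]
  exact (hU ▸ hasFDerivAt_ringInverse (𝕜 := ℝ) U).comp_hasDerivAt t hA

theorem HasDerivAt.matrix_apply (hA : HasDerivAt A A' t) (i j : n) :
    HasDerivAt (fun s => A s i j) (A' i j) t :=
  (entryLinearMap ℝ ℝ i j).toContinuousLinearMap.hasFDerivAt.comp_hasDerivAt t hA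

theorem HasDerivAt.mulVec (hA : HasDerivAt A A' t) (hv : HasDerivAt v v' t) :
    HasDerivAt (fun s => A s *ᵥ v s) (A' *ᵥ v t + A t *ᵥ v') t := by
  refine hasDerivAt_pi.2 fun i => ?_
  simp only [Matrix.mulVec, _root_.dotProduct, Pi.add_apply, ← Finset.sum_add_distrib]
  exact HasDerivAt.fun_sum fun j _ => (hA.matrix_apply i j).fun_mul (hasDerivAt_pi.1 hv j)

theorem HasDerivAt.matrix_conj_inv (hA : HasDerivAt A A' t) (ht : A t = 1) {J : Matrix n n ℝ}
    (hJ : IsUnit J.det) :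
    HasDerivAt (fun s => (A s * J * (A s)⁻¹)⁻¹) (A' * J⁻¹ - J⁻¹ * A') t := by
  have hAinv := hA.matrix_inv (ht ▸ isUnit_one)
  have hconj := (hA.mul_const J).fun_mul hAinv
  convert hconj.matrix_inv (by simpa [ht] using (isUnit_iff_isUnit_det J).2 hJ) using 1
  simp only [ht, inv_one, mul_one, one_mul, mul_neg, ← sub_eq_add_neg, mul_sub, sub_mul]
  rw [← mul_assoc J⁻¹ J, nonsing_inv_mul _ hJ, one_mul, mul_assoc, mul_assoc,
    mul_nonsing_inv _ hJ, mul_one, neg_sub]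

theorem hasDerivAt_augmentedHamiltonian_line (mgl ξL ξR : ℝ) (e : n → ℝ) {J : Matrix n n ℝ}
    (hJ : IsUnit J.det) (Ω : Matrix n n ℝ) (π₀ δπ : n → ℝ) :
    HasDerivAt (fun s : ℝ => augmentedHamiltonian mgl ξL ξR e J (1 + s • Ω) (π₀ + s • δπ))
      (mgl * (e ⬝ᵥ Ω *ᵥ e)
        + 1 / 2 * (δπ ⬝ᵥ J⁻¹ *ᵥ π₀ + π₀ ⬝ᵥ (Ω * J⁻¹ - J⁻¹ * Ω) *ᵥ π₀ + π₀ ⬝ᵥ J⁻¹ *ᵥ δπ)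
        - (δπ ⬝ᵥ e) * ξL + (δπ ⬝ᵥ e + π₀ ⬝ᵥ Ω *ᵥ e) * ξR) 0 := by
  have hΛ : HasDerivAt (fun s : ℝ => 1 + s • Ω) Ω 0 :=
    (((hasDerivAt_id' (0 : ℝ)).smul_const Ω).const_add 1).congr_deriv (one_smul ℝ Ω)
  have hπ : HasDerivAt (fun s : ℝ => π₀ + s • δπ) δπ 0 :=
    (((hasDerivAt_id' (0 : ℝ)).smul_const δπ).const_add π₀).congr_deriv (one_smul ℝ δπ)
  have he := hasDerivAt_const (0 : ℝ) e
  have hB := hΛ.matrix_conj_inv (by simp) hJ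
  exact (((((he.dotProduct (hΛ.mulVec he)).const_mul mgl).add
    ((hπ.dotProduct (hB.mulVec hπ)).const_mul (1 / 2))).sub
    ((hπ.dotProduct he).mul_const ξL)).add
    ((hπ.dotProduct (hΛ.mulVec he)).mul_const ξR)).congr_deriv
    (by simp [dotProduct_add, add_assoc])

end MatrixCurves

theorem hasDerivAt_augmentedHamiltonian_relEquilibrium {n : Type*} [Fintype n] [DecidableEq n]
    (mgl ξL ξR lam a : ℝ) {e : n → ℝ} {J : Matrix n n ℝ} (hJ : IsUnit J.det) (hJsymm : Jᵀ = J)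
    (he : J *ᵥ e = a • e) {Ω : Matrix n n ℝ} (hΩ : e ⬝ᵥ Ω *ᵥ e = 0) (δπ : n → ℝ) :
    HasDerivAt
      (fun s : ℝ => augmentedHamiltonian mgl ξL ξR e J (1 + s • Ω) ((lam * a) • e + s • δπ))
      ((lam - (ξL - ξR)) * (δπ ⬝ᵥ e)) 0 := by
  have hinv : J⁻¹ *ᵥ (lam * a) • e = lam • e := by
    rw [mul_smul, ← he, mulVec_smul, mulVec_mulVec, nonsing_inv_mul _ hJ, one_mulVec]
  have hinv' : ∀ w, (lam * a) • e ⬝ᵥ J⁻¹ *ᵥ w = lam * (e ⬝ᵥ w) := fun w => by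
    rw [dotProduct_mulVec, ← mulVec_transpose, transpose_nonsing_inv, hJsymm, hinv,
      smul_dotProduct, smul_eq_mul]
  refine (hasDerivAt_augmentedHamiltonian_line mgl ξL ξR e hJ Ω _ δπ).congr_deriv ?_
  simp only [sub_mulVec, ← mulVec_mulVec, dotProduct_sub, hinv, hinv']
  simp only [mulVec_smul, dotProduct_smul, smul_dotProduct, hΩ, smul_eq_mul,
    dotProduct_comm δπ e]
  ring

theorem crossMatrix_mulVec {R : Type*} [CommRing R] (x v : Fin 3 → R) :
    !![0, -(x 2), x 1; x 2, 0, -(x 0); -(x 1), x 0, 0] *ᵥ v = x ⨯₃ v := by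
  ext i
  fin_cases i <;> simp [cross_apply, mulVec, dotProduct, Fin.sum_univ_three] <;> ring

theorem augmented_hamiltonian_critical_point (m g l lam ξL ξR I1 I3 : ℝ)
    (hI1 : 0 < I1) (hI3 : 0 < I3)
    (e3 : Fin 3 → ℝ) (he3 : e3 = Pi.single 2 1)
    (Idiag : Matrix (Fin 3) (Fin 3) ℝ) (hId : Idiag = Matrix.diagonal ![I1, I1, I3])
    (hat : (Fin 3 → ℝ) → Matrix (Fin 3) (Fin 3) ℝ)
    (hhat : ∀ x, hat x = !![0, -(x 2), x 1; x 2, 0, -(x 0); -(x 1), x 0, 0])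
    (h : Matrix (Fin 3) (Fin 3) ℝ × (Fin 3 → ℝ) → ℝ)
    (hh : ∀ Λ π, h (Λ, π) = m*g*l * (e3 ⬝ᵥ Λ.mulVec e3)
        + (1/2) * (π ⬝ᵥ ((Λ * Idiag * Λ⁻¹)⁻¹).mulVec π)
        - (π ⬝ᵥ e3) * ξL + (π ⬝ᵥ Λ.mulVec e3) * ξR) :
    (∀ δθ δπ : Fin 3 → ℝ,
      HasDerivAt (fun t : ℝ => h (1 + t • hat δθ, (lam * I3) • e3 + t • δπ))
        ((lam - (ξL - ξR)) * (δπ ⬝ᵥ e3)) 0) ∧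
    ((∀ δθ δπ : Fin 3 → ℝ,
      HasDerivAt (fun t : ℝ => h (1 + t • hat δθ, (lam * I3) • e3 + t • δπ)) 0 0)
      ↔ ξL - ξR = lam) := by
  have hJ : IsUnit Idiag.det := by
    simp [hId, det_diagonal, Fin.prod_univ_three, hI1.ne', hI3.ne']
  have hJsymm : Idiagᵀ = Idiag := hId ▸ diagonal_transpose _
  have heig : Idiag *ᵥ e3 = I3 • e3 := by
    simp [hId, he3, ← Pi.single_smul]
  have hderiv (δθ δπ : Fin 3 → ℝ) :
      HasDerivAt (fun t : ℝ => h (1 + t • hat δθ, (lam * I3) • e3 + t • δπ))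
        ((lam - (ξL - ξR)) * (δπ ⬝ᵥ e3)) 0 := by
    simp only [hh]
    exact hasDerivAt_augmentedHamiltonian_relEquilibrium _ _ _ _ _ hJ hJsymm heig
      (by rw [hhat, crossMatrix_mulVec, dot_cross_self]) δπ
  refine ⟨hderiv, fun hcrit => ?_, fun hξ δθ δπ => ?_⟩
  · have hunit : e3 ⬝ᵥ e3 = 1 := by simp [he3]
    have hslope := (hderiv 0 e3).unique (hcrit 0 e3)
    rw [hunit, mul_one, sub_eq_zero] at hslope
    linarith
  · simpa [hξ] using hderiv δθ δπ
end
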